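/- arXiv:2006.00061 — 2 statements merged into one kernel-verified Lean document; each statement's English description precedes it below -/
import Mathlib

section
/- Let G be a graph whose vertex set consists of a clique C of odd size and an independent set S, such that every vertex of S is adjacent to every vertex of C and no other vertices. Then in any maximum cut (A,B) of G, all vertices of S lie in the same part. -/
/-- The size of the cut determined by the vertex set `A` (and its complement):
the number of edges with one endpoint in `A` and the other outside `A`. -/
noncomputable def cutSize {V : Type*} (G : SimpleGraph V) (A : Set V) : ℕ :=
  {e ∈ G.edgeSet | ∃ u ∈ A, ∃ v ∈ Aᶜ, e = s(u, v)}.ncard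

/-- `A` (together with its complement) is a maximum cut of `G`. -/
def IsMaxCut {V : Type*} (G : SimpleGraph V) (A : Set V) : Prop :=
  ∀ B : Set V, cutSize G B ≤ cutSize G A

/-!
In a maximum cut, moving one vertex to the other side cannot increase the cut, so every vertex
has at least as many neighbours across the cut as on its own side. Every vertex of `S` has
neighbourhood exactly `C`; if two of them were on opposite sides, this would give both
`|C ∩ A| ≤ |C \ A|` and `|C \ A| ≤ |C ∩ A|`, which is impossible since `|C|` is odd.
-/

section MaxCut

variable {V : Type*} {G : SimpleGraph V} {A B : Set V} {s : V}

variable (G) in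
def cutEdges (A : Set V) : Set (Sym2 V) :=
  {e ∈ G.edgeSet | ∃ u ∈ A, ∃ v ∈ Aᶜ, e = s(u, v)}

lemma cutSize_eq_ncard_cutEdges : cutSize G A = (cutEdges G A).ncard := rfl

lemma cutEdges_compl_subset : cutEdges G Aᶜ ⊆ cutEdges G A := by
  rintro e ⟨he, u, hu, v, hv, rfl⟩
  exact ⟨he, v, compl_compl A ▸ hv, u, hu, Sym2.eq_swap⟩

lemma cutEdges_compl : cutEdges G Aᶜ = cutEdges G A :=
  cutEdges_compl_subset.antisymm (by simpa using cutEdges_compl_subset (G := G) (A := Aᶜ))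

lemma IsMaxCut.compl (hA : IsMaxCut G A) : IsMaxCut G Aᶜ := by
  intro B
  rw [cutSize_eq_ncard_cutEdges (A := Aᶜ), cutEdges_compl]
  exact hA B

lemma cutEdges_sdiff_incidenceSet_subset (h : ∀ v, v ≠ s → (v ∈ A ↔ v ∈ B)) :
    cutEdges G A \ G.incidenceSet s ⊆ cutEdges G B \ G.incidenceSet s := by
  rintro e ⟨⟨he, u, hu, v, hv, rfl⟩, hs⟩
  obtain ⟨hus, hvs⟩ : u ≠ s ∧ v ≠ s := by
    simpa [SimpleGraph.incidenceSet, he, eq_comm] using hs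
  exact ⟨⟨he, u, (h u hus).1 hu, v, fun hvB => hv ((h v hvs).2 hvB), rfl⟩, hs⟩

lemma cutEdges_sdiff_incidenceSet_congr (h : ∀ v, v ≠ s → (v ∈ A ↔ v ∈ B)) :
    cutEdges G A \ G.incidenceSet s = cutEdges G B \ G.incidenceSet s :=
  (cutEdges_sdiff_incidenceSet_subset h).antisymm
    (cutEdges_sdiff_incidenceSet_subset fun v hv => (h v hv).symm)

lemma cutEdges_inter_incidenceSet :
    cutEdges G A ∩ G.incidenceSet s
      = (fun v => s(s, v)) '' {v ∈ G.neighborSet s | v ∈ A ↔ s ∉ A} := by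
  ext e
  constructor
  · rintro ⟨⟨he, u, hu, v, hv, rfl⟩, -, hsuv⟩
    rcases Sym2.mem_iff.1 hsuv with rfl | rfl
    · exact ⟨v, ⟨he, by simp_all⟩, rfl⟩
    · exact ⟨u, ⟨G.adj_symm he, by simp_all⟩, Sym2.eq_swap⟩
  · rintro ⟨v, ⟨hadj, hiff⟩, rfl⟩
    refine ⟨⟨hadj, ?_⟩, hadj, Sym2.mem_mk_left s v⟩
    by_cases hsA : s ∈ A
    · exact ⟨s, hsA, v, fun hv => hiff.1 hv hsA, rfl⟩
    · exact ⟨v, hiff.2 hsA, s, hsA, Sym2.eq_swap⟩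

lemma cutSize_eq_ncard_sdiff_add_ncard_neighborSet [Finite V] (A : Set V) (s : V) :
    cutSize G A = (cutEdges G A \ G.incidenceSet s).ncard
      + {v ∈ G.neighborSet s | v ∈ A ↔ s ∉ A}.ncard := by
  rw [cutSize_eq_ncard_cutEdges, ← Set.ncard_inter_add_ncard_sdiff_eq_ncard _ (G.incidenceSet s),
    cutEdges_inter_incidenceSet, Set.ncard_image_of_injective _ fun _ _ => Sym2.congr_right.mp,
    add_comm]

lemma IsMaxCut.ncard_neighborSet_inter_le [Finite V] (hA : IsMaxCut G A) (hs : s ∈ A) :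
    (G.neighborSet s ∩ A).ncard ≤ (G.neighborSet s \ A).ncard := by
  have hrest : cutEdges G (A \ {s}) \ G.incidenceSet s = cutEdges G A \ G.incidenceSet s :=
    cutEdges_sdiff_incidenceSet_congr fun v hv => by simp [hv]
  have hcross : {v ∈ G.neighborSet s | v ∈ A ↔ s ∉ A} = G.neighborSet s \ A := by
    ext v; simp [hs]
  have hsame :
      {v ∈ G.neighborSet s | v ∈ A \ {s} ↔ s ∉ A \ {s}} = G.neighborSet s ∩ A := by
    ext v
    simpa using fun (hadj : G.Adj s v) _ => (G.ne_of_adj hadj).symm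
  have hmove := hA (A \ {s})
  rw [cutSize_eq_ncard_sdiff_add_ncard_neighborSet _ s,
    cutSize_eq_ncard_sdiff_add_ncard_neighborSet _ s, hrest, hcross, hsame] at hmove
  omega

lemma IsMaxCut.ncard_neighborSet_sdiff_le [Finite V] (hA : IsMaxCut G A) (hs : s ∉ A) :
    (G.neighborSet s \ A).ncard ≤ (G.neighborSet s ∩ A).ncard := by
  simpa [Set.sdiff_eq, Set.sdiff_compl] using hA.compl.ncard_neighborSet_inter_le (s := s) hs

end MaxCut

theorem stmt1_general {V : Type*} [Fintype V] (G : SimpleGraph V) (C S : Set V)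
    (hSC : ∀ s ∈ S, ∀ v : V, G.Adj s v ↔ v ∈ C)
    (hodd : Odd C.ncard)
    (A : Set V) (hmax : IsMaxCut G A) :
    (∀ s ∈ S, s ∈ A) ∨ (∀ s ∈ S, s ∉ A) := by
  by_contra! h
  obtain ⟨⟨s₁, hs₁S, hs₁A⟩, s₂, hs₂S, hs₂A⟩ := h
  have hN : ∀ s ∈ S, G.neighborSet s = C := fun s hs => Set.ext (hSC s hs)
  have h₁ := hmax.ncard_neighborSet_sdiff_le hs₁A
  have h₂ := hmax.ncard_neighborSet_inter_le hs₂A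
  rw [hN s₁ hs₁S] at h₁
  rw [hN s₂ hs₂S] at h₂
  have hC := Set.ncard_inter_add_ncard_sdiff_eq_ncard C A
  obtain ⟨k, hk⟩ := hodd
  omega

theorem stmt1 {V : Type*} [Fintype V] (G : SimpleGraph V) (C S : Set V)
    (hpart : C ∪ S = Set.univ) (hdisj : Disjoint C S)
    (hclique : ∀ u ∈ C, ∀ v ∈ C, u ≠ v → G.Adj u v)
    (hindep : ∀ u ∈ S, ∀ v ∈ S, ¬ G.Adj u v)
    (hSC : ∀ s ∈ S, ∀ v : V, G.Adj s v ↔ v ∈ C)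
    (hodd : Odd C.ncard)
    (A : Set V) (hmax : IsMaxCut G A) :
    (∀ s ∈ S, s ∈ A) ∨ (∀ s ∈ S, s ∉ A) :=
  stmt1_general G C S hSC hodd A hmax
end

section
/- Consider the gadget graph with q left long vertices, q right long vertices (the 2q long vertices forming a clique), p left short vertices each adjacent exactly to all left long vertices, and p right short vertices each adjacent exactly to all right long vertices, where p > 2q. Then in any maximum cut of this gadget, all left long vertices lie in one part together with all right short vertices, and all right long vertices lie in the other part together with all left short vertices; in particular the maximum cut has size exactly 2pq + q^2. -/
/-- The gadget graph: a clique on `2q` long vertices (`q` left long and `q` right long),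
`p` left short vertices each adjacent exactly to the left long vertices, and
`p` right short vertices each adjacent exactly to the right long vertices. -/
def Gadget (q p : ℕ) : SimpleGraph ((Fin q ⊕ Fin q) ⊕ (Fin p ⊕ Fin p)) :=
  SimpleGraph.fromRel fun u v =>
    match u, v with
    | Sum.inl _, Sum.inl _ => True
    | Sum.inl (Sum.inl _), Sum.inr (Sum.inl _) => True
    | Sum.inl (Sum.inr _), Sum.inr (Sum.inr _) => True
    | _, _ => False

/-- The set consisting of all left long vertices and all right short vertices. -/
def cutA (q p : ℕ) : Set ((Fin q ⊕ Fin q) ⊕ (Fin p ⊕ Fin p)) :=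
  {v | match v with
       | Sum.inl (Sum.inl _) => True
       | Sum.inr (Sum.inr _) => True
       | _ => False}

/-!
For each of the four vertex classes let `a, b, c, d` count its vertices inside `A` and
`a', b', c', d'` those outside (left long, right long, left short, right short). Then
`cutSize = (a + b) (a' + b') + a c' + c a' + b d' + d b'` and
`2pq + q² = cutSize + (a c + a' c') + (b d + b' d') + (a - b')²`,
so no cut beats `cutA`, and a maximum cut makes all error terms vanish: each long class lies
entirely opposite its own short class, and `a = b'` then puts the two long classes on opposite
sides.
-/

open Finset

theorem cutSize_eq_card {V : Type*} [Fintype V] (G : SimpleGraph V) [DecidableRel G.Adj]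
    (A : Set V) [DecidablePred (· ∈ A)] :
    cutSize G A = #{x : V × V | G.Adj x.1 x.2 ∧ x.1 ∈ A ∧ x.2 ∉ A} := by
  have hinj : Set.InjOn (fun x : V × V => s(x.1, x.2))
      {x : V × V | G.Adj x.1 x.2 ∧ x.1 ∈ A ∧ x.2 ∉ A} := by
    rintro ⟨u, v⟩ huv ⟨u', v'⟩ huv' h
    rcases Sym2.eq_iff.mp h with h | ⟨rfl, rfl⟩
    · simpa using h
    · exact absurd huv'.2.1 huv.2.2
  rw [cutSize, ← Set.ncard_coe_finset, coe_filter_univ, ← hinj.ncard_image]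
  congr 1
  ext e
  constructor
  · rintro ⟨he, u, hu, v, hv, rfl⟩
    exact ⟨(u, v), ⟨he, hu, hv⟩, rfl⟩
  · rintro ⟨⟨u, v⟩, ⟨he, hu, hv⟩, rfl⟩
    exact ⟨he, u, hu, v, hv, rfl⟩

theorem cutSize_fromRel {V : Type*} [Fintype V] (r : V → V → Prop) [DecidableRel r]
    (A : Set V) [DecidablePred (· ∈ A)] :
    cutSize (SimpleGraph.fromRel r) A =
      ∑ u, ∑ v, if (r u v ∨ r v u) ∧ u ∈ A ∧ v ∉ A then 1 else 0 := by
  classical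
  rw [cutSize_eq_card, card_filter, Fintype.sum_prod_type]
  refine sum_congr rfl fun u _ => sum_congr rfl fun v _ => if_congr ?_ rfl rfl
  rw [SimpleGraph.fromRel_adj]
  exact ⟨fun ⟨⟨_, h⟩, hA⟩ => ⟨h, hA⟩, fun ⟨h, hu, hv⟩ => ⟨⟨ne_of_mem_of_not_mem hu hv, h⟩, hu, hv⟩⟩

section Count

variable {ι κ V : Type*} [Fintype ι] [Fintype κ] (A : Set V) [DecidablePred (· ∈ A)]

theorem sum_sum_ite_mem_and_notMem (f : ι → V) (g : κ → V) :
    ∑ i, ∑ j, (if f i ∈ A ∧ g j ∉ A then 1 else 0) = #{i | f i ∈ A} * #{j | g j ∉ A} := by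
  simp only [card_filter, sum_mul_sum, ite_zero_mul_ite_zero, mul_one]

theorem card_filter_mem_add_card_filter_notMem (f : ι → V) :
    #{i | f i ∈ A} + #{i | f i ∉ A} = Fintype.card ι :=
  card_filter_add_card_filter_not _

end Count

section Arithmetic

variable {q p a a' b b' c c' d d' : ℕ}

theorem gadget_count_identity (ha : a + a' = q) (hb : b + b' = q) (hc : c + c' = p)
    (hd : d + d' = p) :
    (((a + b) * (a' + b') + a * c' + c * a' + b * d' + d * b' : ℕ) : ℤ) +
        (a * c + a' * c' + b * d + b' * d' : ℕ) + ((a : ℤ) - b') ^ 2 =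
      (2 * p * q + q ^ 2 : ℕ) := by
  subst ha hc
  obtain rfl : b' = a + a' - b := by omega
  obtain rfl : d' = c + c' - d := by omega
  push_cast [show b ≤ a + a' by omega, show d ≤ c + c' by omega]
  ring

theorem gadget_count_le (ha : a + a' = q) (hb : b + b' = q) (hc : c + c' = p)
    (hd : d + d' = p) :
    (a + b) * (a' + b') + a * c' + c * a' + b * d' + d * b' ≤ 2 * p * q + q ^ 2 := by
  have := gadget_count_identity ha hb hc hd
  zify
  nlinarith [sq_nonneg ((a : ℤ) - b')]

theorem opposite_sides_of_mul_eq_zero (hq : 0 < q) (hp : 0 < p) (ha : a + a' = q)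
    (hc : c + c' = p) (h : a * c = 0) (h' : a' * c' = 0) :
    (a' = 0 ∧ c = 0) ∨ (a = 0 ∧ c' = 0) := by
  rcases Nat.mul_eq_zero.mp h with h | h <;> rcases Nat.mul_eq_zero.mp h' with h' | h' <;> omega

theorem gadget_count_eq_cases (hq : 0 < q) (hp : 0 < p) (ha : a + a' = q) (hb : b + b' = q)
    (hc : c + c' = p) (hd : d + d' = p)
    (heq : (a + b) * (a' + b') + a * c' + c * a' + b * d' + d * b' = 2 * p * q + q ^ 2) :
    (a' = 0 ∧ b = 0 ∧ c = 0 ∧ d' = 0) ∨ (a = 0 ∧ b' = 0 ∧ c' = 0 ∧ d = 0) := by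
  have hid := gadget_count_identity ha hb hc hd
  rw [heq] at hid
  have hsq : (a : ℤ) - b' = 0 := by nlinarith [sq_nonneg ((a : ℤ) - b')]
  have hprod : a * c + a' * c' + b * d + b' * d' = 0 := by
    zify
    nlinarith [sq_nonneg ((a : ℤ) - b')]
  rcases opposite_sides_of_mul_eq_zero hq hp ha hc (by omega) (by omega) with hac | hac <;>
  rcases opposite_sides_of_mul_eq_zero hq hp hb hd (by omega) (by omega) with hbd | hbd <;>
  omega

end Arithmetic

section Gadget

variable {q p : ℕ}

@[simp]
theorem inl_inl_mem_cutA (i : Fin q) :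
    (.inl (.inl i) : (Fin q ⊕ Fin q) ⊕ (Fin p ⊕ Fin p)) ∈ cutA q p :=
  trivial

@[simp]
theorem inl_inr_notMem_cutA (i : Fin q) :
    (.inl (.inr i) : (Fin q ⊕ Fin q) ⊕ (Fin p ⊕ Fin p)) ∉ cutA q p :=
  id

@[simp]
theorem inr_inl_notMem_cutA (j : Fin p) :
    (.inr (.inl j) : (Fin q ⊕ Fin q) ⊕ (Fin p ⊕ Fin p)) ∉ cutA q p :=
  id

@[simp]
theorem inr_inr_mem_cutA (j : Fin p) :
    (.inr (.inr j) : (Fin q ⊕ Fin q) ⊕ (Fin p ⊕ Fin p)) ∈ cutA q p :=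
  trivial

theorem eq_cutA_of_forall {A : Set ((Fin q ⊕ Fin q) ⊕ (Fin p ⊕ Fin p))}
    (hLL : ∀ i, .inl (.inl i) ∈ A) (hLR : ∀ i, .inl (.inr i) ∉ A)
    (hSL : ∀ j, .inr (.inl j) ∉ A) (hSR : ∀ j, .inr (.inr j) ∈ A) : A = cutA q p := by
  ext ((i | i) | (j | j)) <;> simp [*]

theorem cutSize_gadget (A : Set ((Fin q ⊕ Fin q) ⊕ (Fin p ⊕ Fin p))) [DecidablePred (· ∈ A)] :
    cutSize (Gadget q p) A =
      (#{i | .inl (.inl i) ∈ A} + #{i | .inl (.inr i) ∈ A}) *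
          (#{i | .inl (.inl i) ∉ A} + #{i | .inl (.inr i) ∉ A}) +
        #{i | .inl (.inl i) ∈ A} * #{j | .inr (.inl j) ∉ A} +
        #{j | .inr (.inl j) ∈ A} * #{i | .inl (.inl i) ∉ A} +
        #{i | .inl (.inr i) ∈ A} * #{j | .inr (.inr j) ∉ A} +
        #{j | .inr (.inr j) ∈ A} * #{i | .inl (.inr i) ∉ A} := by
  classical
  rw [Gadget, cutSize_fromRel]
  simp only [Fintype.sum_sum_type, or_self, or_true, true_and, or_false, false_and, if_false,
    sum_const_zero, add_zero, zero_add]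
  simp only [sum_add_distrib, sum_sum_ite_mem_and_notMem]
  ring

theorem cutSize_gadget_cutA : cutSize (Gadget q p) (cutA q p) = 2 * p * q + q ^ 2 := by
  classical
  rw [cutSize_gadget]
  simp
  ring

end Gadget

theorem stmt4 (q p : ℕ) (hq : 0 < q) (hp : 2 * q < p)
    (A : Set ((Fin q ⊕ Fin q) ⊕ (Fin p ⊕ Fin p)))
    (hmax : IsMaxCut (Gadget q p) A) :
    (A = cutA q p ∨ A = (cutA q p)ᶜ) ∧
      cutSize (Gadget q p) A = 2 * p * q + q ^ 2 := by
  classical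
  have hcard {n : ℕ} (f : Fin n → (Fin q ⊕ Fin q) ⊕ (Fin p ⊕ Fin p)) :
      #{i | f i ∈ A} + #{i | f i ∉ A} = n :=
    (card_filter_mem_add_card_filter_notMem A f).trans (Fintype.card_fin n)
  have hle : cutSize (Gadget q p) A ≤ 2 * p * q + q ^ 2 := by
    rw [cutSize_gadget]
    exact gadget_count_le (hcard _) (hcard _) (hcard _) (hcard _)
  have heq : cutSize (Gadget q p) A = 2 * p * q + q ^ 2 :=
    le_antisymm hle (cutSize_gadget_cutA ▸ hmax (cutA q p))
  refine ⟨?_, heq⟩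
  rw [cutSize_gadget] at heq
  rcases gadget_count_eq_cases hq (by omega) (hcard _) (hcard _) (hcard _) (hcard _) heq with
    ⟨hLL, hLR, hSL, hSR⟩ | ⟨hLL, hLR, hSL, hSR⟩
  · simp only [card_filter_eq_zero_iff, mem_univ, true_implies, not_not] at hLL hLR hSL hSR
    exact .inl (eq_cutA_of_forall hLL hLR hSL hSR)
  · simp only [card_filter_eq_zero_iff, mem_univ, true_implies, not_not] at hLL hLR hSL hSR
    refine .inr (eq_compl_comm.mpr (eq_cutA_of_forall ?_ ?_ ?_ ?_).symm) <;> simpa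
end
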